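/- (Gradual sampling with Δ̂ > 0: O(p²Δ̂²/μ) bound.) Let F_s, F_l : ℝ^d → ℝ be differentiable, let p ∈ (0,1], set 𝓛 = (1 − p)F_s + pF_l, and suppose 𝓛 is L-smooth, satisfies the μ-PL condition with infimum value 𝓛*, and ‖∇F_s(w) − ∇F_l(w)‖ ≤ Δ̂ for all w ∈ ℝ^d, with Δ̂ > 0. Let D₀ = 𝓛(w_0) − 𝓛* > 0, assume 4μD₀ ≥ p²Δ̂², set η₁ = min(1/L, p²Δ̂²/(2σ²L)) with σ > 0, assume η₁μ ≤ 1, and let n' ∈ ℕ satisfy n' ≥ (1/(η₁μ))·log(4μD₀/(p²Δ̂²)). Let (W_t) be adapted to a filtration (𝓕_t) with deterministic initial point W_0 = w_0, and let G_t be square-integrable, 𝓕_{t+1}-measurable ℝ^d-valued random vectors with, almost surely, W_{t+1} = W_t − η₁G_t, E[G_t | 𝓕_t] = ∇F_s(W_t), and E[‖G_t − ∇F_s(W_t)‖² | 𝓕_t] ≤ σ². Then E[𝓛(W_{n'})] − 𝓛* ≤ p²Δ̂²/μ. -/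

import Mathlib

/-!
Write `e_t = E[𝓛(W_t)] - 𝓛*` and `h = ∇F_s`. Since `∇𝓛 = (1 - p)∇F_s + p∇F_l`, the oracle has
bias `‖∇F_s - ∇𝓛‖ = p‖∇F_s - ∇F_l‖ ≤ pΔ̂`. The descent lemma for the `L`-smooth `𝓛`, applied
pathwise with `G_t = (G_t - h(W_t)) + h(W_t)`, the bias bound, `η₁L ≤ 1` and the PL inequality bound
`𝓛(W_{t+1}) - 𝓛*` by `(1 - η₁μ)(𝓛(W_t) - 𝓛*) + η₁p²Δ̂²/2 + Lη₁²/2 ‖G_t - h(W_t)‖²` plus a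
term linear in the noise `G_t - h(W_t)` with an `𝓕_t`-measurable coefficient. That term has
mean zero because `G_t - E[G_t | 𝓕_t]` is orthogonal in `L²` to `𝓕_t`-measurable vectors,
so `e_{t+1} ≤ (1 - η₁μ) e_t + η₁p²Δ̂²/2 + Lη₁²σ²/2 ≤ (1 - η₁μ) e_t + (3/4) η₁p²Δ̂²` by the
choice of `η₁`. Unrolling gives `e_n ≤ (1 - η₁μ)^n D₀ + 3p²Δ̂²/(4μ)`, and
`(1 - η₁μ)^{n'} ≤ exp(-n'η₁μ) ≤ p²Δ̂²/(4μD₀)` by the choice of `n'`.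
-/

open MeasureTheory RealInnerProductSpace

open scoped NNReal ENNReal

section Smooth

variable {E : Type*} [NormedAddCommGroup E] [InnerProductSpace ℝ E] [CompleteSpace E]

theorem gradient_const_mul_add_const_mul {f g : E → ℝ} (hf : Differentiable ℝ f)
    (hg : Differentiable ℝ g) (a b : ℝ) (x : E) :
    gradient (fun v => a * f v + b * g v) x = a • gradient f x + b • gradient g x := by
  have h : HasFDerivAt (fun v => a * f v + b * g v) (a • fderiv ℝ f x + b • fderiv ℝ g x) x :=
    ((hf x).hasFDerivAt.const_mul a).add ((hg x).hasFDerivAt.const_mul b)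
  rw [gradient, h.fderiv, map_add, map_smul, map_smul]
  rfl

theorem norm_gradient_sub_gradient_one_sub_mul_add_mul_le {f g : E → ℝ}
    (hf : Differentiable ℝ f) (hg : Differentiable ℝ g) {p Δ : ℝ} (hp : 0 ≤ p) {x : E}
    (hΔ : ‖gradient f x - gradient g x‖ ≤ Δ) :
    ‖gradient f x - gradient (fun v => (1 - p) * f v + p * g v) x‖ ≤ p * Δ := by
  rw [gradient_const_mul_add_const_mul hf hg,
    show gradient f x - ((1 - p) • gradient f x + p • gradient g x)
      = p • (gradient f x - gradient g x) by module, norm_smul, Real.norm_of_nonneg hp]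
  exact mul_le_mul_of_nonneg_left hΔ hp

theorem abs_sub_sub_inner_gradient_le {f : E → ℝ} {K : ℝ≥0} (hf : Differentiable ℝ f)
    (hlip : LipschitzWith K (gradient f)) (u v : E) :
    |f v - f u - ⟪gradient f u, v - u⟫| ≤ K / 2 * ‖v - u‖ ^ 2 := by
  set w := v - u
  let φ : ℝ → ℝ := fun s => f (u + s • w) - f u - s * ⟪gradient f u, w⟫
  have hφ : ∀ s, HasDerivAt φ ⟪gradient f (u + s • w) - gradient f u, w⟫ s := by
    intro s
    have hline : HasDerivAt (fun s : ℝ => u + s • w) w s := by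
      simpa using ((hasDerivAt_id s).smul_const w).const_add u
    exact ((((hf _).hasGradientAt.hasFDerivAt.comp_hasDerivAt s hline).sub_const (f u)).sub
      ((hasDerivAt_id s).mul_const ⟪gradient f u, w⟫)).congr_deriv
      (by simp [inner_sub_left])
  have hB : ∀ s, HasDerivAt (fun s : ℝ => K / 2 * s ^ 2 * ‖w‖ ^ 2) (K * s * ‖w‖ ^ 2) s := by
    intro s
    exact (((hasDerivAt_pow 2 s).const_mul (K / 2 : ℝ)).mul_const (‖w‖ ^ 2)).congr_deriv
      (by push_cast; ring)
  have hbound : ∀ s ∈ Set.Ico (0 : ℝ) 1,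
      ‖⟪gradient f (u + s • w) - gradient f u, w⟫‖ ≤ K * s * ‖w‖ ^ 2 := by
    rintro s ⟨hs, -⟩
    calc ‖⟪gradient f (u + s • w) - gradient f u, w⟫‖
        ≤ ‖gradient f (u + s • w) - gradient f u‖ * ‖w‖ := norm_inner_le_norm _ _
      _ ≤ K * ‖(u + s • w) - u‖ * ‖w‖ := by gcongr; exact hlip.norm_sub_le _ _
      _ = K * s * ‖w‖ ^ 2 := by
        rw [add_sub_cancel_left, norm_smul, Real.norm_of_nonneg hs]; ring
  have := image_norm_le_of_norm_deriv_right_le_deriv_boundary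
    (fun s _ => (hφ s).continuousAt.continuousWithinAt) (fun s _ => (hφ s).hasDerivWithinAt)
    (by simp [φ]) hB hbound (Set.right_mem_Icc.2 zero_le_one)
  simpa [φ, w] using this

theorem sub_le_of_biased_gradient_step {f : E → ℝ} {L μ fstar β η : ℝ} (hf : Differentiable ℝ f)
    (hL : 0 ≤ L) (hlip : LipschitzWith L.toNNReal (gradient f)) (hη : 0 ≤ η) (hηL : η * L ≤ 1)
    {x g h : E} (hPL : 2 * μ * (f x - fstar) ≤ ‖gradient f x‖ ^ 2)
    (hh : ‖h - gradient f x‖ ≤ β) :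
    f (x - η • g) - fstar ≤ (1 - η * μ) * (f x - fstar) + (η * β ^ 2 / 2
      + (L * η ^ 2 / 2 * ‖g - h‖ ^ 2 + ⟪(L * η ^ 2) • h - η • gradient f x, g - h⟫)) := by
  set a := gradient f x
  have hdescent : f (x - η • g) - f x + η * ⟪a, g⟫ ≤ L / 2 * (η ^ 2 * ‖g‖ ^ 2) := by
    have := (abs_le.1 (abs_sub_sub_inner_gradient_le hf hlip x (x - η • g))).2
    rwa [Real.coe_toNNReal _ hL, sub_sub_cancel_left, inner_neg_right, real_inner_smul_right,
      norm_neg, norm_smul, mul_pow, Real.norm_eq_abs, sq_abs, sub_neg_eq_add] at this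
  have hsplit_norm : ‖g‖ ^ 2 = ‖g - h‖ ^ 2 + 2 * ⟪h, g - h⟫ + ‖h‖ ^ 2 := by
    have := norm_add_sq_real (g - h) h
    rwa [sub_add_cancel, real_inner_comm h] at this
  have hsplit_inner : ⟪a, g⟫ = ⟪a, g - h⟫ + ⟪a, h⟫ := by
    rw [← inner_add_right, sub_add_cancel]
  have hbias : ‖h‖ ^ 2 - 2 * ⟪h, a⟫ + ‖a‖ ^ 2 ≤ β ^ 2 := by
    rw [← norm_sub_sq_real]
    exact pow_le_pow_left₀ (norm_nonneg _) hh 2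
  rw [inner_sub_left, real_inner_smul_left, real_inner_smul_left]
  rw [real_inner_comm a h] at hbias
  rw [hsplit_norm, hsplit_inner] at hdescent
  linarith [mul_le_mul_of_nonneg_left hbias hη, mul_le_mul_of_nonneg_left hPL hη,
    mul_nonneg (mul_nonneg hη (sub_nonneg.2 hηL)) (sq_nonneg ‖h‖)]

end Smooth

section Integrability

variable {Ω E : Type*} {mΩ : MeasurableSpace Ω} {P : Measure Ω} [NormedAddCommGroup E]

theorem MeasureTheory.MemLp.integrable_inner [InnerProductSpace ℝ E] {f g : Ω → E}
    (hf : MemLp f 2 P) (hg : MemLp g 2 P) : Integrable (fun ω => ⟪f ω, g ω⟫) P :=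
  (L2.integrable_inner (𝕜 := ℝ) (hf.toLp f) (hg.toLp g)).congr <| by
    filter_upwards [hf.coeFn_toLp, hg.coeFn_toLp] with ω hfω hgω
    rw [hfω, hgω]

theorem MeasureTheory.MemLp.comp_lipschitzWith [IsFiniteMeasure P] {F : Type*}
    [NormedAddCommGroup F] {p : ℝ≥0∞} {K : ℝ≥0} {g : E → F} (hg : LipschitzWith K g)
    {f : Ω → E} (hf : MemLp f p P) : MemLp (fun ω => g (f ω)) p P := by
  refine ((hf.norm.const_mul K).add (memLp_const ‖g 0‖)).of_le
    (hg.continuous.comp_aestronglyMeasurable hf.1) (ae_of_all _ fun ω => ?_)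
  have := hg.norm_sub_le (f ω) 0
  rw [sub_zero] at this
  calc ‖g (f ω)‖ ≤ K * ‖f ω‖ + ‖g 0‖ := by linarith [norm_le_norm_add_norm_sub' (g (f ω)) (g 0)]
    _ ≤ ‖K * ‖f ω‖ + ‖g 0‖‖ := Real.le_norm_self _

theorem integrable_comp_of_lipschitzWith_gradient [IsFiniteMeasure P] [InnerProductSpace ℝ E]
    [CompleteSpace E] {f : E → ℝ} {K : ℝ≥0} (hf : Differentiable ℝ f)
    (hlip : LipschitzWith K (gradient f)) {X : Ω → E} (hX : MemLp X 2 P) :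
    Integrable (fun ω => f (X ω)) P := by
  have hquad : Integrable (fun ω => f (X ω) - f 0 - ⟪gradient f 0, X ω⟫) P := by
    refine Integrable.mono' (((memLp_two_iff_integrable_sq_norm hX.1).1 hX).const_mul (K / 2))
      (by have := hf.continuous; have := hX.1; fun_prop) (ae_of_all _ fun ω => ?_)
    simpa using abs_sub_sub_inner_gradient_le hf hlip 0 (X ω)
  have hlin : Integrable (fun ω => ⟪gradient f 0, X ω⟫) P :=
    (hX.integrable one_le_two).const_inner _
  refine ((hquad.add (integrable_const (f 0))).add hlin).congr (ae_of_all _ fun ω => ?_)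
  simp only [Pi.add_apply]
  ring

end Integrability

section ConditionalExpectation

variable {Ω E : Type*} {m mΩ : MeasurableSpace Ω} {P : Measure Ω}
  [NormedAddCommGroup E] [InnerProductSpace ℝ E] [CompleteSpace E]

theorem integral_inner_sub_condExp_eq_zero [IsFiniteMeasure P] (hm : m ≤ mΩ) {f c : Ω → E}
    (hf : MemLp f 2 P) (hc : MemLp c 2 P) (hcm : AEStronglyMeasurable[m] c P) :
    ∫ ω, ⟪c ω, f ω - P[f|m] ω⟫ ∂P = 0 := by
  have hL2 := inner_condExpL2_eq_inner_fun (𝕜 := ℝ) hm (hf.toLp f) (hc.toLp c)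
    (hcm.congr hc.coeFn_toLp.symm)
  rw [L2.inner_def, L2.inner_def] at hL2
  have hcond : ∫ ω, ⟪c ω, P[f|m] ω⟫ ∂P = ∫ ω, ⟪c ω, f ω⟫ ∂P := by
    refine (integral_congr_ae ?_).trans (hL2.trans (integral_congr_ae ?_))
    · filter_upwards [hf.condExpL2_ae_eq_condExp (𝕜 := ℝ) hm, hc.coeFn_toLp] with ω h1 h2
      rw [h1, h2, real_inner_comm]
    · filter_upwards [hf.coeFn_toLp, hc.coeFn_toLp] with ω h1 h2
      rw [h1, h2, real_inner_comm]
  simp_rw [inner_sub_right]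
  rw [integral_sub (hc.integrable_inner hf) (hc.integrable_inner (hf.condExp one_le_two)),
    hcond, sub_self]

theorem integral_le_of_condExp_le [IsProbabilityMeasure P] (hm : m ≤ mΩ) {f : Ω → ℝ} {C : ℝ}
    (hf : ∀ᵐ ω ∂P, P[f|m] ω ≤ C) : ∫ ω, f ω ∂P ≤ C := by
  rw [← integral_condExp hm]
  simpa using integral_mono_ae integrable_condExp (integrable_const C) hf

theorem integral_sgd_noise_le [IsProbabilityMeasure P] (hm : m ≤ mΩ) {G h c : Ω → E} {a σ : ℝ}
    (ha : 0 ≤ a) (hG : MemLp G 2 P) (hc : MemLp c 2 P) (hcm : AEStronglyMeasurable[m] c P)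
    (hmean : P[G|m] =ᵐ[P] h) (hvar : ∀ᵐ ω ∂P, P[fun ω' => ‖G ω' - h ω'‖ ^ 2|m] ω ≤ σ ^ 2) :
    ∫ ω, (a * ‖G ω - h ω‖ ^ 2 + ⟪c ω, G ω - h ω⟫) ∂P ≤ a * σ ^ 2 := by
  have hh : MemLp h 2 P := (hG.condExp one_le_two).ae_eq hmean
  have hcross : ∫ ω, ⟪c ω, G ω - h ω⟫ ∂P = 0 := by
    rw [← integral_inner_sub_condExp_eq_zero hm hG hc hcm]
    refine integral_congr_ae ?_
    filter_upwards [hmean] with ω hω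
    rw [hω]
  have hsq : Integrable (fun ω => ‖G ω - h ω‖ ^ 2) P :=
    (memLp_two_iff_integrable_sq_norm (hG.sub hh).1).1 (hG.sub hh)
  have hinner : Integrable (fun ω => ⟪c ω, G ω - h ω⟫) P := hc.integrable_inner (hG.sub hh)
  rw [integral_add (hsq.const_mul a) hinner, integral_const_mul, hcross, add_zero]
  gcongr
  exact integral_le_of_condExp_le hm hvar

end ConditionalExpectation

theorem integral_sub_le_of_biased_sgd_step {Ω E : Type*} {m mΩ : MeasurableSpace Ω}
    {P : Measure Ω} [IsProbabilityMeasure P] [NormedAddCommGroup E] [InnerProductSpace ℝ E]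
    [CompleteSpace E] (hm : m ≤ mΩ) {f : E → ℝ} {b : E → E} {L μ fstar β σ η : ℝ}
    (hf : Differentiable ℝ f) (hL : 0 ≤ L) (hlip : LipschitzWith L.toNNReal (gradient f))
    (hPL : ∀ v, 2 * μ * (f v - fstar) ≤ ‖gradient f v‖ ^ 2)
    (hb : ∀ v, ‖b v - gradient f v‖ ≤ β) (hη : 0 ≤ η) (hηL : η * L ≤ 1)
    {X Y G : Ω → E} (hXm : AEStronglyMeasurable[m] X P) (hX : MemLp X 2 P) (hG : MemLp G 2 P)
    (hY : ∀ᵐ ω ∂P, Y ω = X ω - η • G ω) (hmean : P[G|m] =ᵐ[P] fun ω => b (X ω))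
    (hvar : ∀ᵐ ω ∂P, P[fun ω' => ‖G ω' - b (X ω')‖ ^ 2|m] ω ≤ σ ^ 2) :
    (∫ ω, f (Y ω) ∂P) - fstar
      ≤ (1 - η * μ) * ((∫ ω, f (X ω) ∂P) - fstar) + η * β ^ 2 / 2 + L * η ^ 2 / 2 * σ ^ 2 := by
  set h : Ω → E := fun ω => b (X ω)
  set c : Ω → E := fun ω => (L * η ^ 2) • h ω - η • gradient f (X ω)
  have hh : MemLp h 2 P := (hG.condExp one_le_two).ae_eq hmean
  have hc : MemLp c 2 P := (hh.const_smul _).sub ((hX.comp_lipschitzWith hlip).const_smul η)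
  have hcm : AEStronglyMeasurable[m] c P :=
    ((stronglyMeasurable_condExp.aestronglyMeasurable.congr hmean).const_smul _).sub
      ((hlip.continuous.comp_aestronglyMeasurable hXm).const_smul η)
  have hY2 : MemLp Y 2 P := (hX.sub (hG.const_smul η)).ae_eq (hY.mono fun ω hω => hω.symm)
  have hfX := integrable_comp_of_lipschitzWith_gradient hf hlip hX
  have hfY := integrable_comp_of_lipschitzWith_gradient hf hlip hY2
  have hpointwise : ∀ᵐ ω ∂P, f (Y ω) - fstar ≤ (1 - η * μ) * (f (X ω) - fstar)
      + (η * β ^ 2 / 2 + (L * η ^ 2 / 2 * ‖G ω - h ω‖ ^ 2 + ⟪c ω, G ω - h ω⟫)) := by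
    filter_upwards [hY] with ω hω
    rw [hω]
    exact sub_le_of_biased_gradient_step hf hL hlip hη hηL (hPL _) (hb _)
  have hdecay : Integrable (fun ω => (1 - η * μ) * (f (X ω) - fstar)) P :=
    (hfX.sub (integrable_const _)).const_mul _
  have hnoise : Integrable (fun ω => L * η ^ 2 / 2 * ‖G ω - h ω‖ ^ 2 + ⟪c ω, G ω - h ω⟫) P :=
    (((memLp_two_iff_integrable_sq_norm (hG.sub hh).1).1 (hG.sub hh)).const_mul _).add
      (hc.integrable_inner (hG.sub hh))
  have hrest : Integrable (fun ω => η * β ^ 2 / 2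
      + (L * η ^ 2 / 2 * ‖G ω - h ω‖ ^ 2 + ⟪c ω, G ω - h ω⟫)) P := (integrable_const _).add hnoise
  calc (∫ ω, f (Y ω) ∂P) - fstar = ∫ ω, (f (Y ω) - fstar) ∂P := by
        rw [integral_sub hfY (integrable_const _), integral_const, probReal_univ, one_smul]
    _ ≤ ∫ ω, ((1 - η * μ) * (f (X ω) - fstar)
          + (η * β ^ 2 / 2 + (L * η ^ 2 / 2 * ‖G ω - h ω‖ ^ 2 + ⟪c ω, G ω - h ω⟫))) ∂P :=
        integral_mono_ae (hfY.sub (integrable_const _)) (hdecay.add hrest) hpointwise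
    _ = (1 - η * μ) * ((∫ ω, f (X ω) ∂P) - fstar) + (η * β ^ 2 / 2
          + ∫ ω, (L * η ^ 2 / 2 * ‖G ω - h ω‖ ^ 2 + ⟪c ω, G ω - h ω⟫) ∂P) := by
        rw [integral_add hdecay hrest, integral_add (integrable_const _) hnoise,
          integral_const_mul, integral_sub hfX (integrable_const _)]
        simp
    _ ≤ _ := by
        have := integral_sgd_noise_le hm (a := L * η ^ 2 / 2) (by positivity) hG hc hcm hmean hvar
        linarith

theorem memLp_two_of_update {Ω E : Type*} {mΩ : MeasurableSpace Ω} {P : Measure Ω}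
    [NormedAddCommGroup E] [NormedSpace ℝ E] {η : ℝ} {W G : ℕ → Ω → E}
    (hW0 : MemLp (W 0) 2 P) (hG : ∀ t, MemLp (G t) 2 P)
    (hupdate : ∀ t, ∀ᵐ ω ∂P, W (t + 1) ω = W t ω - η • G t ω) (t : ℕ) :
    MemLp (W t) 2 P := by
  induction t with
  | zero => exact hW0
  | succ t ih => exact (ih.sub ((hG t).const_smul η)).ae_eq ((hupdate t).mono fun ω hω => hω.symm)

theorem sub_le_pow_mul_of_sub_le_mul {e : ℕ → ℝ} {q K : ℝ} (hq : 0 ≤ q)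
    (he : ∀ n, e (n + 1) - K ≤ q * (e n - K)) (n : ℕ) : e n - K ≤ q ^ n * (e 0 - K) := by
  induction n with
  | zero => simp
  | succ n ih =>
    calc e (n + 1) - K ≤ q * (e n - K) := he n
      _ ≤ q * (q ^ n * (e 0 - K)) := by gcongr
      _ = q ^ (n + 1) * (e 0 - K) := by ring

theorem one_sub_pow_le_inv_of_log_le {x R : ℝ} {n : ℕ} (hx : 0 < x) (hx1 : x ≤ 1) (hR : 0 < R)
    (hn : 1 / x * Real.log R ≤ n) : (1 - x) ^ n ≤ R⁻¹ := by
  have hlog : Real.log R ≤ n * x := by rwa [one_div_mul_eq_div, div_le_iff₀ hx] at hn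
  calc (1 - x) ^ n ≤ Real.exp (-x) ^ n := by
        gcongr
        linarith [Real.add_one_le_exp (-x)]
    _ = Real.exp (-(n * x)) := by rw [← Real.exp_nat_mul, mul_neg]
    _ ≤ Real.exp (-Real.log R) := by gcongr
    _ = R⁻¹ := by rw [Real.exp_neg, Real.exp_log hR]

theorem gradual_sampling_positive_bias_rate_general
    {d : ℕ} (Fs Fl : EuclideanSpace ℝ (Fin d) → ℝ) (p : ℝ)
    (hp0 : 0 < p)
    (hFs : Differentiable ℝ Fs) (hFl : Differentiable ℝ Fl)
    (𝓛 : EuclideanSpace ℝ (Fin d) → ℝ)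
    (h𝓛 : 𝓛 = fun v => (1 - p) * Fs v + p * Fl v)
    (L μPL Lstar Δ σ : ℝ) (hL : 0 < L)
    (hsmooth : LipschitzWith (Real.toNNReal L) (gradient 𝓛))
    (hμ : 0 < μPL)
    (hPL : ∀ v, 2 * μPL * (𝓛 v - Lstar) ≤ ‖gradient 𝓛 v‖ ^ 2)
    (hΔ : ∀ v, ‖gradient Fs v - gradient Fl v‖ ≤ Δ) (hΔpos : 0 < Δ)
    (w0 : EuclideanSpace ℝ (Fin d)) (D₀ : ℝ) (hD₀ : D₀ = 𝓛 w0 - Lstar)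
    (hD₀pos : 0 < D₀) (hσ : 0 < σ)
    (η₁ : ℝ) (hη₁def : η₁ = min (1 / L) (p ^ 2 * Δ ^ 2 / (2 * σ ^ 2 * L)))
    (hη₁μ : η₁ * μPL ≤ 1)
    (n' : ℕ)
    (hn' : 1 / (η₁ * μPL) * Real.log (4 * μPL * D₀ / (p ^ 2 * Δ ^ 2)) ≤ n')
    {Ω : Type*} {mΩ : MeasurableSpace Ω} (P : Measure Ω) [IsProbabilityMeasure P]
    (ℱ : Filtration ℕ mΩ)
    (W G : ℕ → Ω → EuclideanSpace ℝ (Fin d))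
    (hadapted : Adapted ℱ W)
    (hG2 : ∀ t, MemLp (G t) 2 P)
    (hW0 : ∀ ω, W 0 ω = w0)
    (hupdate : ∀ t, ∀ᵐ ω ∂P, W (t + 1) ω = W t ω - η₁ • G t ω)
    (hmean : ∀ t, P[G t | ℱ t] =ᵐ[P] fun ω => gradient Fs (W t ω))
    (hvar : ∀ t, ∀ᵐ ω ∂P,
      (P[(fun ω' => ‖G t ω' - gradient Fs (W t ω')‖ ^ 2) | ℱ t]) ω ≤ σ ^ 2) :
    (∫ ω, 𝓛 (W n' ω) ∂P) - Lstar ≤ p ^ 2 * Δ ^ 2 / μPL := by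
  have hη : 0 < η₁ := hη₁def ▸ lt_min (by positivity) (by positivity)
  have hηL : η₁ * L ≤ 1 := (le_div_iff₀ hL).1 (hη₁def ▸ min_le_left _ _)
  have hησ : η₁ * (2 * σ ^ 2 * L) ≤ p ^ 2 * Δ ^ 2 :=
    (le_div_iff₀ (by positivity)).1 (hη₁def ▸ min_le_right _ _)
  have hbias : ∀ v, ‖gradient Fs v - gradient 𝓛 v‖ ≤ p * Δ := fun v =>
    h𝓛 ▸ norm_gradient_sub_gradient_one_sub_mul_add_mul_le hFs hFl hp0.le (hΔ v)
  have hW2 := memLp_two_of_update (by rw [funext hW0]; exact memLp_const w0) hG2 hupdate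
  set K := 3 / 4 * (p * Δ) ^ 2 / μPL with hK_def
  have hstep : ∀ t, ((∫ ω, 𝓛 (W (t + 1) ω) ∂P) - Lstar) - K
      ≤ (1 - η₁ * μPL) * (((∫ ω, 𝓛 (W t ω) ∂P) - Lstar) - K) := fun t => by
    have := integral_sub_le_of_biased_sgd_step (ℱ.le t)
      (h𝓛 ▸ (hFs.const_mul _).add (hFl.const_mul _)) hL.le hsmooth hPL hbias hη.le hηL
      (hadapted t).aestronglyMeasurable (hW2 t) (hG2 t) (hupdate t) (hmean t) (hvar t)
    have hK : η₁ * μPL * K = 3 / 4 * η₁ * (p * Δ) ^ 2 := by rw [hK_def]; field_simp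
    linarith [mul_le_mul_of_nonneg_left hησ hη.le]
  have hpow := one_sub_pow_le_inv_of_log_le (mul_pos hη hμ) hη₁μ (by positivity) hn'
  have hunroll := sub_le_pow_mul_of_sub_le_mul (e := fun t => (∫ ω, 𝓛 (W t ω) ∂P) - Lstar)
    (sub_nonneg.2 hη₁μ) hstep n'
  simp only [hW0, integral_const, probReal_univ, one_smul, ← hD₀] at hunroll
  calc (∫ ω, 𝓛 (W n' ω) ∂P) - Lstar ≤ K + (1 - η₁ * μPL) ^ n' * D₀ := by
        have hqK := mul_nonneg (pow_nonneg (sub_nonneg.2 hη₁μ) n') (by positivity : 0 ≤ K)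
        linarith
    _ ≤ K + (4 * μPL * D₀ / (p ^ 2 * Δ ^ 2))⁻¹ * D₀ := by gcongr
    _ = p ^ 2 * Δ ^ 2 / μPL := by rw [hK_def]; field_simp; ring

/-- Gradual sampling with `Δ̂ > 0`: with step size
`η₁ = min (1/L) (p² Δ̂² / (2 σ² L))` and at least
`log(4 μ D₀ / (p² Δ̂²)) / (η₁ μ)` steps, the expected excess risk is at most
`p² Δ̂² / μ`. -/
theorem gradual_sampling_positive_bias_rate
    {d : ℕ} (Fs Fl : EuclideanSpace ℝ (Fin d) → ℝ) (p : ℝ)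
    (hp0 : 0 < p) (hp1 : p ≤ 1)
    (hFs : Differentiable ℝ Fs) (hFl : Differentiable ℝ Fl)
    (𝓛 : EuclideanSpace ℝ (Fin d) → ℝ)
    (h𝓛 : 𝓛 = fun v => (1 - p) * Fs v + p * Fl v)
    (L μPL Lstar Δ σ : ℝ) (hL : 0 < L)
    (hsmooth : LipschitzWith (Real.toNNReal L) (gradient 𝓛))
    (hμ : 0 < μPL)
    (hattained : ∃ wstar, 𝓛 wstar = Lstar ∧ ∀ v, Lstar ≤ 𝓛 v)
    (hPL : ∀ v, 2 * μPL * (𝓛 v - Lstar) ≤ ‖gradient 𝓛 v‖ ^ 2)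
    (hΔ : ∀ v, ‖gradient Fs v - gradient Fl v‖ ≤ Δ) (hΔpos : 0 < Δ)
    (w0 : EuclideanSpace ℝ (Fin d)) (D₀ : ℝ) (hD₀ : D₀ = 𝓛 w0 - Lstar)
    (hD₀pos : 0 < D₀) (hσ : 0 < σ)
    (hgap : p ^ 2 * Δ ^ 2 ≤ 4 * μPL * D₀)
    (η₁ : ℝ) (hη₁def : η₁ = min (1 / L) (p ^ 2 * Δ ^ 2 / (2 * σ ^ 2 * L)))
    (hη₁μ : η₁ * μPL ≤ 1)
    (n' : ℕ)
    (hn' : 1 / (η₁ * μPL) * Real.log (4 * μPL * D₀ / (p ^ 2 * Δ ^ 2)) ≤ n')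
    {Ω : Type*} {mΩ : MeasurableSpace Ω} (P : Measure Ω) [IsProbabilityMeasure P]
    (ℱ : Filtration ℕ mΩ)
    (W G : ℕ → Ω → EuclideanSpace ℝ (Fin d))
    (hadapted : Adapted ℱ W)
    (hGmeas : ∀ t, StronglyMeasurable[ℱ (t + 1)] (G t))
    (hG2 : ∀ t, MemLp (G t) 2 P)
    (hW0 : ∀ ω, W 0 ω = w0)
    (hupdate : ∀ t, ∀ᵐ ω ∂P, W (t + 1) ω = W t ω - η₁ • G t ω)
    (hmean : ∀ t, P[G t | ℱ t] =ᵐ[P] fun ω => gradient Fs (W t ω))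
    (hvar : ∀ t, ∀ᵐ ω ∂P,
      (P[(fun ω' => ‖G t ω' - gradient Fs (W t ω')‖ ^ 2) | ℱ t]) ω ≤ σ ^ 2) :
    (∫ ω, 𝓛 (W n' ω) ∂P) - Lstar ≤ p ^ 2 * Δ ^ 2 / μPL :=
  gradual_sampling_positive_bias_rate_general Fs Fl p hp0 hFs hFl 𝓛 h𝓛 L μPL Lstar Δ σ hL hsmooth hμ
    hPL hΔ hΔpos w0 D₀ hD₀ hD₀pos hσ η₁ hη₁def hη₁μ n' hn' P ℱ W G hadapted hG2 hW0 hupdate hmean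
    hvar
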